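/- arXiv:1112.1313 — 2 statements merged into one kernel-verified Lean document; each statement's English description precedes it below -/
import Mathlib

section
/- If m ≥ 8 is even and s ≥ 2 is odd, then ms + 1 ≤ min-seed(C_m ⊘ C_{3s}, 3) ≤ ms + 2. -/
/-- Activation closure: `v` eventually becomes active when starting from seed set `S`
in graph `G` with thresholds `θ` (a vertex activates once at least `θ v` of its
neighbors are active). -/
inductive Activated {V : Type*} (G : SimpleGraph V) (θ : V → ℕ) (S : Set V) : V → Prop
  | base {v : V} : v ∈ S → Activated G θ S v
  | step {v : V} (T : Finset V) (hadj : ∀ u ∈ T, G.Adj u v) (hcard : θ v ≤ T.card)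
      (hact : ∀ u ∈ T, Activated G θ S u) : Activated G θ S v

/-- Minimum size of a target set whose activation closure is all of `V`. -/
noncomputable def minSeed {V : Type*} [Fintype V] (G : SimpleGraph V) (θ : V → ℕ) : ℕ :=
  sInf {k | ∃ S : Finset V, S.card = k ∧ ∀ v, Activated G θ (↑S) v}

/-- The torus cordalis `C_m ⊘ C_n` on vertices `(i,j)`, `i : ZMod m`, `j : Fin n`
(`j` playing the role of `1,…,n`): edges `(i,j)(i±1,j)`, `(i,j)(i,j+1)` for `j < n`,
and the shifted wrap-around edge `(i,n)(i+1,1)`. -/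
def torusCordalis (m n : ℕ) [NeZero m] : SimpleGraph (ZMod m × Fin n) :=
  SimpleGraph.fromRel (fun a b =>
    (b.1 = a.1 + 1 ∧ b.2 = a.2) ∨
    (a.1 = b.1 ∧ (b.2 : ℕ) = (a.2 : ℕ) + 1) ∨
    ((a.2 : ℕ) = n - 1 ∧ (b.2 : ℕ) = 0 ∧ b.1 = a.1 + 1))

/-!
Lower bound: a 4-regular graph with threshold 3 is percolated one vertex at a time, and
activating a vertex with `a ≥ 3` active neighbours changes the number of edges leaving the
active set by `4 - 2a ≤ -2`, the last activation by `-4`. A percolating set `S` has at most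
`4 |S|` such edges, so `4 |S| ≥ 2 (3ms - |S| - 1) + 4`, i.e. `|S| ≥ ms + 1/3`.

Upper bound: in natural coordinates `(c, j)`, column `c` carries the seeds `j ≡ seedClass c`
(mod 3): alternately `1, 0` on the columns `6, …, m - 1` and the staircase `1, 2, 0, 1, 2, 0` on
the columns `0, …, 5`, which makes `ms` seeds; add the seeds `(0, 0)` and `(4, 0)`. The remaining
vertices are pendant vertices (three seeded neighbours) hanging off a single path: a helix that
runs along the rows `j ≡ 2` (mod 3) from column `5` round to column `0` and climbs back to
column `5` up a staircase through the columns `0, …, 5`, rising six rows per turn. As `3s` is an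
odd multiple of `3` it visits the rows `≡ 2` (mod 6) on a first sweep and the rows `≡ 5`
(mod 6) on a second one, and the two extra seeds cut it open. Ranking pendants first and the
helix by (sweep, height, column), every non-seed vertex has at most one neighbour that is neither
seeded nor of lower rank, so everything is activated in order of rank.
-/

open Finset

namespace Activated

variable {V : Type*} {G : SimpleGraph V} {θ : V → ℕ}

theorem mono {S S' : Set V} (hS : S ⊆ S') {v : V} (h : Activated G θ S v) :
    Activated G θ S' v := by
  induction h with
  | base hv => exact base (hS hv)
  | step T hadj hcard _ ih => exact step T hadj hcard ih

theorem of_forall_adj_ne [G.LocallyFinite] {S : Set V} {v w : V} (hdeg : θ v + 1 ≤ G.degree v)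
    (h : ∀ u, G.Adj v u → u ≠ w → Activated G θ S u) : Activated G θ S v := by
  classical
  refine step ((G.neighborFinset v).erase w) (fun u hu => ?_) ?_ fun u hu => ?_
  · exact ((G.mem_neighborFinset v u).1 (mem_of_mem_erase hu)).symm
  · have := pred_card_le_card_erase (s := G.neighborFinset v) (a := w)
    rw [G.card_neighborFinset_eq_degree] at this
    omega
  · exact h u ((G.mem_neighborFinset v u).1 (mem_of_mem_erase hu)) (ne_of_mem_erase hu)

theorem exists_notMem_le_card_neighborFinset_inter [DecidableEq V] [G.LocallyFinite]
    {A : Finset V} {v : V} (h : Activated G θ A v) (hv : v ∉ A) :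
    ∃ u ∉ A, θ u ≤ #(G.neighborFinset u ∩ A) := by
  induction h with
  | base hvA => exact absurd hvA hv
  | @step v T hadj hcard _ ih =>
    by_cases hT : ∀ u ∈ T, u ∈ A
    · refine ⟨v, hv, hcard.trans (card_le_card fun u hu => mem_inter.2 ⟨?_, hT u hu⟩)⟩
      exact (G.mem_neighborFinset v u).2 (hadj u hu).symm
    · obtain ⟨u, hu, huA⟩ := not_forall₂.1 hT
      exact ih u hu huA

end Activated

theorem activated_of_rank {V α : Type*} {G : SimpleGraph V} [G.LocallyFinite] {θ : V → ℕ}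
    [Preorder α] [WellFoundedLT α] (ρ : V → α) {S : Set V} (hdeg : ∀ v, θ v + 1 ≤ G.degree v)
    (h : ∀ v ∉ S, ∃ w, ∀ u, G.Adj v u → u ≠ w → u ∈ S ∨ ρ u < ρ v) (v : V) :
    Activated G θ S v := by
  induction v using (InvImage.wf ρ wellFounded_lt).induction with
  | _ v ih =>
    by_cases hv : v ∈ S
    · exact .base hv
    obtain ⟨w, hw⟩ := h v hv
    exact .of_forall_adj_ne (hdeg v) fun u huv huw => (hw u huv huw).elim .base (ih u)

namespace SimpleGraph

variable {V : Type*} [Fintype V] [DecidableEq V] (G : SimpleGraph V) [DecidableRel G.Adj]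

def edgeBoundaryCard (A : Finset V) : ℕ := ∑ u ∈ A, #(G.neighborFinset u \ A)

theorem edgeBoundaryCard_univ : G.edgeBoundaryCard univ = 0 := by
  simp [edgeBoundaryCard]

theorem edgeBoundaryCard_le {d : ℕ} (hG : G.IsRegularOfDegree d) (A : Finset V) :
    G.edgeBoundaryCard A ≤ d * #A :=
  calc G.edgeBoundaryCard A ≤ ∑ _u ∈ A, d := sum_le_sum fun u _ =>
        (card_le_card sdiff_subset).trans (G.card_neighborFinset_eq_degree u ▸ (hG u).le)
    _ = d * #A := by rw [sum_const, smul_eq_mul, mul_comm]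

theorem edgeBoundaryCard_insert {A : Finset V} {v : V} (hv : v ∉ A) :
    G.edgeBoundaryCard (insert v A) + #(G.neighborFinset v ∩ A) =
      G.edgeBoundaryCard A + #(G.neighborFinset v \ insert v A) := by
  have hA : ∀ u ∈ A, #(G.neighborFinset u \ A) =
      #(G.neighborFinset u \ insert v A) + if G.Adj u v then 1 else 0 := by
    intro u _
    rw [sdiff_insert]
    split_ifs with huv
    · rw [card_erase_add_one (mem_sdiff.2 ⟨(G.mem_neighborFinset u v).2 huv, hv⟩)]
    · rw [erase_eq_of_notMem fun h => huv ((G.mem_neighborFinset u v).1 (mem_sdiff.1 h).1),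
        add_zero]
  have hcount : (∑ u ∈ A, if G.Adj u v then 1 else 0) = #(G.neighborFinset v ∩ A) := by
    rw [sum_boole, Nat.cast_id, inter_comm, ← filter_mem_eq_inter]
    congr 1
    ext u
    simp [G.adj_comm]
  rw [edgeBoundaryCard, edgeBoundaryCard, sum_insert hv, sum_congr rfl hA, sum_add_distrib, hcount]
  ring

theorem card_neighborFinset_inter_add_card_sdiff_insert {d : ℕ} (hG : G.IsRegularOfDegree d)
    (A : Finset V) (u : V) :
    #(G.neighborFinset u ∩ A) + #(G.neighborFinset u \ insert u A) = d := by
  rw [sdiff_insert_of_notMem (G.notMem_neighborFinset_self u), card_inter_add_card_sdiff,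
    G.card_neighborFinset_eq_degree, hG u]

theorem le_edgeBoundaryCard_of_forall_activated {d r : ℕ} (hG : G.IsRegularOfDegree d)
    (hdr : d ≤ 2 * r) (k : ℕ) (A : Finset V) (hA : #Aᶜ = k + 1)
    (hperc : ∀ v, Activated G (fun _ => r) A v) :
    (2 * r - d) * k + d ≤ G.edgeBoundaryCard A := by
  obtain ⟨v, hv⟩ := card_pos.1 (hA ▸ k.succ_pos : 0 < #Aᶜ)
  obtain ⟨u, hu, hready⟩ := (hperc v).exists_notMem_le_card_neighborFinset_inter (mem_compl.1 hv)
  have hins := G.edgeBoundaryCard_insert hu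
  have hsplit := G.card_neighborFinset_inter_add_card_sdiff_insert hG A u
  have hA' : #(insert u A)ᶜ = k := by
    rw [card_compl, card_insert_of_notMem hu, ← Nat.sub_sub, ← card_compl, hA, Nat.add_sub_cancel]
  cases k with
  | zero =>
    have huniv : insert u A = univ := compl_eq_empty_iff _ |>.1 (card_eq_zero.1 hA')
    simp only [huniv, sdiff_eq_empty_iff_subset.2 (subset_univ _), edgeBoundaryCard_univ,
      card_empty] at hins hsplit
    omega
  | succ k =>
    have := le_edgeBoundaryCard_of_forall_activated hG hdr k (insert u A) hA'
      fun w => (hperc w).mono (coe_subset.2 (subset_insert u A))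
    have hc : 2 * r - d + d = 2 * r := Nat.sub_add_cancel hdr
    generalize 2 * r - d = c at this hc ⊢
    rw [mul_add_one]
    omega

variable {G}

theorem le_mul_card_of_forall_activated {d r : ℕ} (hG : G.IsRegularOfDegree d) (hdr : d ≤ 2 * r)
    {A : Finset V} (hA : A ≠ univ) (hperc : ∀ v, Activated G (fun _ => r) A v) :
    (2 * r - d) * (#Aᶜ - 1) + d ≤ d * #A := by
  obtain ⟨k, hk⟩ := Nat.exists_eq_succ_of_ne_zero (n := #Aᶜ)
    (by rwa [Ne, card_eq_zero, compl_eq_empty_iff])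
  rw [hk, Nat.succ_sub_one]
  exact (G.le_edgeBoundaryCard_of_forall_activated hG hdr k A hk hperc).trans
    (G.edgeBoundaryCard_le hG A)

end SimpleGraph

theorem ZMod.val_add_one_eq_ite {m : ℕ} [NeZero m] (x : ZMod m) :
    (x + 1).val = if x.val + 1 = m then 0 else x.val + 1 := by
  have hx := x.val_lt
  rw [← ZMod.natCast_zmod_val x, ← Nat.cast_add_one, ZMod.val_natCast, ZMod.val_natCast,
    Nat.mod_eq_of_lt hx]
  split_ifs with h
  · rw [h, Nat.mod_self]
  · exact Nat.mod_eq_of_lt (by omega)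

theorem ZMod.val_sub_one_eq_ite {m : ℕ} [NeZero m] (x : ZMod m) :
    (x - 1).val = if x.val = 0 then m - 1 else x.val - 1 := by
  have hx := x.val_lt
  have hcast : x - 1 = ((x.val + (m - 1) : ℕ) : ZMod m) := by
    rw [Nat.cast_add, ZMod.natCast_zmod_val, Nat.cast_sub NeZero.one_le, ZMod.natCast_self,
      Nat.cast_one, zero_sub, sub_eq_add_neg]
  rw [hcast, ZMod.val_natCast]
  split_ifs with h
  · rw [h, zero_add, Nat.mod_eq_of_lt (by omega)]
  · rw [show x.val + (m - 1) = x.val - 1 + m by omega, Nat.add_mod_right,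
      Nat.mod_eq_of_lt (by omega)]

namespace TorusCordalis

/-! The vertex `(x, j)` of `C_m ⊘ C_n` has natural coordinates `(x.val, j) ∈ [0, m) × [0, n)`;
these are the coordinates of its four neighbours. -/

def stepRight (m : ℕ) (p : ℕ × ℕ) : ℕ × ℕ := (if p.1 + 1 = m then 0 else p.1 + 1, p.2)

def stepLeft (m : ℕ) (p : ℕ × ℕ) : ℕ × ℕ := (if p.1 = 0 then m - 1 else p.1 - 1, p.2)

def stepUp (m n : ℕ) (p : ℕ × ℕ) : ℕ × ℕ :=
  if p.2 + 1 < n then (p.1, p.2 + 1) else ((stepRight m p).1, 0)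

def stepDown (m n : ℕ) (p : ℕ × ℕ) : ℕ × ℕ :=
  if 0 < p.2 then (p.1, p.2 - 1) else ((stepLeft m p).1, n - 1)

section Steps

variable {m n : ℕ} {p : ℕ × ℕ}

theorem eq_stepUp_iff {q : ℕ × ℕ} (hp : p.1 < m ∧ p.2 < n) (hq : q.1 < m ∧ q.2 < n) :
    q = stepUp m n p ↔ p = stepDown m n q := by
  obtain ⟨c, j⟩ := p
  obtain ⟨c', j'⟩ := q
  simp only at hp hq
  unfold stepUp stepDown stepRight stepLeft
  dsimp only
  split_ifs <;> simp only [Prod.ext_iff] <;> omega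

theorem steps_ne_self (hm : 1 < m) (hp : p.1 < m ∧ p.2 < n) :
    stepRight m p ≠ p ∧ stepLeft m p ≠ p ∧ stepUp m n p ≠ p ∧ stepDown m n p ≠ p := by
  obtain ⟨c, j⟩ := p
  simp only at hp
  unfold stepUp stepDown stepRight stepLeft
  dsimp only
  split_ifs <;> simp only [ne_eq, Prod.ext_iff] <;> omega

theorem steps_nodup (hm : 3 ≤ m) (hn : 3 ≤ n) (hp : p.1 < m ∧ p.2 < n) :
    [stepRight m p, stepLeft m p, stepUp m n p, stepDown m n p].Nodup := by
  obtain ⟨c, j⟩ := p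
  simp only at hp
  simp only [List.nodup_cons, List.mem_cons, List.not_mem_nil, or_false, List.nodup_nil, and_true]
  unfold stepUp stepDown stepRight stepLeft
  dsimp only
  split_ifs <;> simp only [Prod.ext_iff, and_true, not_false_eq_true] <;> omega

end Steps

section Neighbours

variable {m n : ℕ}

def coords (v : ZMod m × Fin n) : ℕ × ℕ := (v.1.val, v.2.val)

def right (v : ZMod m × Fin n) : ZMod m × Fin n := (v.1 + 1, v.2)

def left (v : ZMod m × Fin n) : ZMod m × Fin n := (v.1 - 1, v.2)

theorem eq_right_iff {v w : ZMod m × Fin n} : w = right v ↔ v = left w := by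
  simp only [right, left, Prod.ext_iff, eq_sub_iff_add_eq, eq_comm]

variable [NeZero m]

theorem coords_lt (v : ZMod m × Fin n) : (coords v).1 < m ∧ (coords v).2 < n :=
  ⟨v.1.val_lt, v.2.isLt⟩

theorem coords_injective : Function.Injective (coords (m := m) (n := n)) := by
  intro v w h
  simp only [coords, Prod.mk.injEq] at h
  exact Prod.ext (ZMod.val_injective m h.1) (Fin.ext h.2)

theorem coords_right (v : ZMod m × Fin n) : coords (right v) = stepRight m (coords v) := by
  simp only [coords, right, stepRight, ZMod.val_add_one_eq_ite]
  rfl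

theorem coords_left (v : ZMod m × Fin n) : coords (left v) = stepLeft m (coords v) := by
  simp only [coords, left, stepLeft, ZMod.val_sub_one_eq_ite]
  rfl

variable [NeZero n]

def up (v : ZMod m × Fin n) : ZMod m × Fin n :=
  if h : v.2.val + 1 < n then (v.1, ⟨v.2.val + 1, h⟩) else (v.1 + 1, ⟨0, NeZero.pos n⟩)

def down (v : ZMod m × Fin n) : ZMod m × Fin n :=
  if h : 0 < v.2.val then (v.1, ⟨v.2.val - 1, by omega⟩)
  else (v.1 - 1, ⟨n - 1, Nat.sub_lt (NeZero.pos n) one_pos⟩)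

theorem coords_up (v : ZMod m × Fin n) : coords (up v) = stepUp m n (coords v) := by
  by_cases h : v.2.val + 1 < n
  · simp [up, stepUp, coords, h]
  · simp only [up, stepUp, coords, h, stepRight, ZMod.val_add_one_eq_ite, dite_false, if_false]
    rfl

theorem coords_down (v : ZMod m × Fin n) : coords (down v) = stepDown m n (coords v) := by
  by_cases h : 0 < v.2.val
  · simp [down, stepDown, coords, h]
  · simp [down, stepDown, coords, h, stepLeft, ZMod.val_sub_one_eq_ite]

theorem eq_up_iff {v w : ZMod m × Fin n} : w = up v ↔ v = down w :=
  calc w = up v ↔ coords w = stepUp m n (coords v) := by rw [← coords_up, coords_injective.eq_iff]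
    _ ↔ coords v = stepDown m n (coords w) := eq_stepUp_iff (coords_lt v) (coords_lt w)
    _ ↔ v = down w := by rw [← coords_down, coords_injective.eq_iff]

theorem rel_iff {a b : ZMod m × Fin n} :
    ((b.1 = a.1 + 1 ∧ b.2 = a.2) ∨ (a.1 = b.1 ∧ (b.2 : ℕ) = (a.2 : ℕ) + 1) ∨
      ((a.2 : ℕ) = n - 1 ∧ (b.2 : ℕ) = 0 ∧ b.1 = a.1 + 1)) ↔ b = right a ∨ b = up a := by
  rw [← coords_injective.eq_iff, ← coords_injective.eq_iff, coords_right, coords_up]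
  have ha := coords_lt a
  have hb := coords_lt b
  simp only [coords, ← (ZMod.val_injective m).eq_iff, ZMod.val_add_one_eq_ite, Fin.ext_iff]
    at ha hb ⊢
  generalize a.1.val = c at *
  generalize b.1.val = c' at *
  generalize (a.2 : ℕ) = j at *
  generalize (b.2 : ℕ) = j' at *
  unfold stepUp stepRight
  dsimp only
  split_ifs <;> simp only [Prod.ext_iff] <;> omega

theorem adj_iff (hm : 1 < m) {v w : ZMod m × Fin n} :
    (torusCordalis m n).Adj v w ↔ w = right v ∨ w = left v ∨ w = up v ∨ w = down v := by
  have hne := steps_ne_self (n := n) hm (coords_lt v)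
  simp only [← coords_right, ← coords_left, ← coords_up, ← coords_down, coords_injective.ne_iff]
    at hne
  rw [torusCordalis, SimpleGraph.fromRel_adj, rel_iff, rel_iff, eq_right_iff (v := w),
    eq_up_iff (v := w)]
  constructor
  · rintro ⟨-, (h | h) | (h | h)⟩ <;> simp [h]
  · rintro (rfl | rfl | rfl | rfl)
    · exact ⟨hne.1.symm, by simp⟩
    · exact ⟨hne.2.1.symm, by simp⟩
    · exact ⟨hne.2.2.1.symm, by simp⟩
    · exact ⟨hne.2.2.2.symm, by simp⟩

theorem isRegularOfDegree_four (hm : 3 ≤ m) (hn : 3 ≤ n)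
    [DecidableRel (torusCordalis m n).Adj] : (torusCordalis m n).IsRegularOfDegree 4 := by
  intro v
  have hnodup := steps_nodup hm hn (coords_lt v)
  rw [← coords_right, ← coords_left, ← coords_up, ← coords_down] at hnodup
  have hN : (torusCordalis m n).neighborFinset v = [right v, left v, up v, down v].toFinset := by
    ext w
    simp [adj_iff (by omega : 1 < m)]
  rw [← SimpleGraph.card_neighborFinset_eq_degree, hN,
    List.toFinset_card_of_nodup ((List.nodup_map_iff coords_injective).1 (by simpa using hnodup))]
  rfl

end Neighbours

def seedClass (c : ℕ) : ℕ := if c < 6 then (c + 1) % 3 else (c + 1) % 2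

def IsSeed (p : ℕ × ℕ) : Prop := p.2 % 3 = seedClass p.1 ∨ p.2 = 0 ∧ (p.1 = 0 ∨ p.1 = 4)

instance : DecidablePred IsSeed := fun _ => by unfold IsSeed; infer_instance

/-- `0` on the pendant vertices (and on seeds, where it does not matter), otherwise `1` or `2`
according as the helix passes `p` on its first or second sweep: in column `c < 6` at the heights
`j ≡ c + 2, c + 3`, resp. `j ≡ c + 5, c` (mod 6), in the other columns at `j ≡ 2`, resp. `5`. -/
def sweep (p : ℕ × ℕ) : ℕ :=
  if 6 ≤ p.1 ∧ p.2 % 3 ≠ 2 then 0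
  else if (p.2 + 7 - if p.1 < 6 then p.1 else 0) % 6 < 2 then 2 else 1

/-- Along a row the helix runs from column `5` round to column `0`, so there column `0` counts
as column `m`. -/
def helixRank (m : ℕ) (p : ℕ × ℕ) : ℕ ×ₗ ℕ ×ₗ ℕ :=
  toLex (sweep p, toLex (p.2, if p.1 = 0 ∧ p.2 % 3 = 2 then m else p.1))

def ActiveBefore (m : ℕ) (q p : ℕ × ℕ) : Prop := IsSeed q ∨ helixRank m q < helixRank m p

/-- The helix only moves right and up, so apart from its successor the neighbours of a helix
vertex are seeds, pendants or earlier; a pendant vertex has three seeded neighbours. -/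
theorem activeBefore_neighbours {m s : ℕ} (hm : 8 ≤ m) (hme : Even m) (hs : Odd s)
    {p : ℕ × ℕ} (hp : p.1 < m ∧ p.2 < 3 * s) (hv : ¬IsSeed p) :
    ((ActiveBefore m (stepRight m p) p ∨ ActiveBefore m (stepUp m (3 * s) p) p) ∧
        ActiveBefore m (stepLeft m p) p ∧ ActiveBefore m (stepDown m (3 * s) p) p) ∨
      IsSeed (stepRight m p) ∧ IsSeed (stepLeft m p) ∧ IsSeed (stepUp m (3 * s) p) := by
  obtain ⟨c, j⟩ := p
  obtain ⟨hc, hj⟩ := hp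
  obtain ⟨w, rfl⟩ := hs
  have hme : m % 2 = 0 := Nat.even_iff.1 hme
  obtain ⟨e, rfl⟩ : ∃ e, m = e + 8 := ⟨m - 8, by omega⟩
  dsimp only at hc hj
  have h6 : ∀ a x, (6 * a + x) % 6 = x % 6 := by omega
  have h3 : ∀ a x, (6 * a + x) % 3 = x % 3 := by omega
  have htop : 3 * (2 * w + 1) - 1 = 6 * w + 2 := by omega
  have hrow : j = 0 ∨ j = 6 * w + 2 ∨
      ∃ q r, 1 ≤ r ∧ r ≤ 6 ∧ j = 6 * q + r ∧ 6 * q + r < 6 * w + 2 := by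
    rcases Nat.eq_zero_or_pos j with h | h
    · exact .inl h
    rcases eq_or_ne j (6 * w + 2) with h' | h'
    · exact .inr (.inl h')
    · exact .inr (.inr ⟨(j - 1) / 6, (j - 1) % 6 + 1, by omega, by omega, by omega, by omega⟩)
  obtain hc6 | ⟨d, rfl, hde⟩ | rfl : c ≤ 6 ∨ (∃ d, c = d + 7 ∧ d < e) ∨ c = e + 7 := by
    rcases le_or_gt c 6 with h | h
    · exact .inl h
    · rcases lt_or_eq_of_le (show c ≤ e + 7 by omega) with h' | h'
      · exact .inr (.inl ⟨c - 7, by omega, by omega⟩)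
      · exact .inr (.inr h')
  -- Once the column is one of `0, …, 6`, generic or `m - 1`, and the height is `0`, `3s - 1` or
  -- of known residue mod 6 in between, every predicate evaluates.
  on_goal 1 => interval_cases c
  all_goals rcases hrow with rfl | rfl | ⟨q, r, hr1, hr6, rfl, hqr⟩
  all_goals try interval_cases r
  all_goals
    simp (disch := omega) only [stepRight, stepLeft, stepUp, stepDown, if_pos, if_neg, htop]
      at hv ⊢
    simp only [ActiveBefore, helixRank, Prod.Lex.toLex_lt_toLex, sweep, IsSeed, seedClass, h6, h3,
      Nat.add_assoc, Nat.reduceAdd, Nat.reduceMod, Nat.reduceLeDiff, Nat.reduceSubDiff,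
      Nat.reduceEqDiff, ne_eq, Nat.lt_iff_add_one_le, Nat.add_sub_cancel, ↓reduceIte,
      not_false_eq_true, not_true_eq_false, true_or, or_true, false_or, or_false, true_and,
      and_true, false_and, and_false] at hv ⊢ <;>
    omega

variable {m s : ℕ} [NeZero m]

def seedSet (m n : ℕ) [NeZero m] : Finset (ZMod m × Fin n) :=
  univ.filter fun v => IsSeed (coords v)

theorem seedClass_lt_three (c : ℕ) : seedClass c < 3 := by
  unfold seedClass
  split_ifs <;> omega

theorem card_filter_seedClass :
    #(univ.filter fun v : ZMod m × Fin (3 * s) => (v.2 : ℕ) % 3 = seedClass v.1.val) = m * s := by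
  let f : ZMod m × Fin s → ZMod m × Fin (3 * s) := fun x =>
    (x.1, ⟨3 * x.2 + seedClass x.1.val, by have := seedClass_lt_three x.1.val; omega⟩)
  have hf : f.Injective := by
    rintro ⟨x, k⟩ ⟨y, l⟩ h
    simp only [f, Prod.mk.injEq, Fin.mk.injEq] at h
    obtain ⟨rfl, h⟩ := h
    exact Prod.ext rfl (Fin.ext (by dsimp only; omega))
  have himage : univ.filter (fun v : ZMod m × Fin (3 * s) => (v.2 : ℕ) % 3 = seedClass v.1.val) =
      univ.image f := by
    ext v
    simp only [mem_filter, mem_univ, true_and, mem_image]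
    constructor
    · intro hv
      refine ⟨(v.1, ⟨v.2 / 3, by omega⟩), Prod.ext rfl (Fin.ext ?_)⟩
      simp only [f]
      omega
    · rintro ⟨x, -, rfl⟩
      have := seedClass_lt_three x.1.val
      simp only [f]
      omega
  rw [himage, card_image_of_injective _ hf, card_univ, Fintype.card_prod, ZMod.card,
    Fintype.card_fin]

theorem card_seedSet (hm : 5 ≤ m) (hs : 0 < s) : #(seedSet m (3 * s)) = m * s + 2 := by
  have h4 : (4 : ZMod m).val = 4 := ZMod.val_cast_of_lt (by omega : 4 < m)
  have hsplit : seedSet m (3 * s) =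
      univ.filter (fun v : ZMod m × Fin (3 * s) => (v.2 : ℕ) % 3 = seedClass v.1.val) ∪
        univ.filter (fun v : ZMod m × Fin (3 * s) =>
          (v.2 : ℕ) = 0 ∧ (v.1.val = 0 ∨ v.1.val = 4)) := by
    ext v
    simp [seedSet, IsSeed, coords]
  have hextra : univ.filter (fun v : ZMod m × Fin (3 * s) =>
      (v.2 : ℕ) = 0 ∧ (v.1.val = 0 ∨ v.1.val = 4)) = {(0, ⟨0, by omega⟩), (4, ⟨0, by omega⟩)} := by
    ext v
    simp only [mem_filter, mem_univ, true_and, mem_insert, mem_singleton, Prod.ext_iff, Fin.ext_iff,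
      ← (ZMod.val_injective m).eq_iff, ZMod.val_zero, h4]
    tauto
  have h04 : ((0 : ZMod m), (⟨0, by omega⟩ : Fin (3 * s))) ≠ (4, ⟨0, by omega⟩) := by
    simp [Prod.ext_iff, ← (ZMod.val_injective m).eq_iff, h4]
  rw [hsplit, card_union_of_disjoint, card_filter_seedClass, hextra, card_pair h04]
  rw [disjoint_filter]
  rintro v - hv ⟨h0, h1 | h1⟩ <;> simp [seedClass, h0, h1] at hv

theorem activeBefore_coords_iff [NeZero s] {u v : ZMod m × Fin (3 * s)} :
    ActiveBefore m (coords u) (coords v) ↔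
      u ∈ (seedSet m (3 * s) : Set _) ∨ helixRank m (coords u) < helixRank m (coords v) := by
  simp [ActiveBefore, seedSet]

theorem forall_activated_seedSet (hm : 8 ≤ m) (hme : Even m) (hs : Odd s)
    [DecidableRel (torusCordalis m (3 * s)).Adj] :
    ∀ v, Activated (torusCordalis m (3 * s)) (fun _ => 3) (seedSet m (3 * s)) v := by
  have : NeZero s := ⟨hs.pos.ne'⟩
  have hreg := isRegularOfDegree_four (m := m) (n := 3 * s) (by omega) (by have := hs.pos; omega)
  refine activated_of_rank (fun v => helixRank m (coords v)) (fun v => (hreg v).ge) fun v hv => ?_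
  have hv' : ¬IsSeed (coords v) := by simpa [seedSet] using hv
  suffices h : ∃ w, ∀ u ∈ [right v, left v, up v, down v], u ≠ w →
      ActiveBefore m (coords u) (coords v) by
    obtain ⟨w, hw⟩ := h
    refine ⟨w, fun u hu huw => activeBefore_coords_iff.1 (hw u ?_ huw)⟩
    simpa using (adj_iff (by omega : 1 < m)).1 hu
  simp only [List.forall_mem_cons, List.not_mem_nil, IsEmpty.forall_iff, implies_true, and_true,
    coords_right, coords_left, coords_up, coords_down]
  rcases activeBefore_neighbours hm hme hs (coords_lt v) hv' with ⟨hR | hU, hL, hD⟩ | ⟨hR, hL, hU⟩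
  · exact ⟨up v, fun _ => hR, fun _ => hL, fun h => absurd rfl h, fun _ => hD⟩
  · exact ⟨right v, fun h => absurd rfl h, fun _ => hL, fun _ => hU, fun _ => hD⟩
  · exact ⟨down v, fun _ => .inl hR, fun _ => .inl hL, fun _ => .inl hU, fun h => absurd rfl h⟩

end TorusCordalis

theorem minSeed_torusCordalis_even_odd_general (m s : ℕ) [NeZero m] (hm : 8 ≤ m)
    (hmeven : Even m) (hsodd : Odd s) :
    m * s + 1 ≤ minSeed (torusCordalis m (3 * s)) (fun _ => 3) ∧
    minSeed (torusCordalis m (3 * s)) (fun _ => 3) ≤ m * s + 2 := by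
  classical
  have hs := hsodd.pos
  have : NeZero s := ⟨hs.ne'⟩
  have hup : m * s + 2 ∈ {k | ∃ S : Finset (ZMod m × Fin (3 * s)), #S = k ∧
      ∀ v, Activated (torusCordalis m (3 * s)) (fun _ => 3) S v} :=
    ⟨_, TorusCordalis.card_seedSet (by omega) hs,
      TorusCordalis.forall_activated_seedSet hm hmeven hsodd⟩
  refine ⟨le_csInf ⟨_, hup⟩ ?_, Nat.sInf_le hup⟩
  rintro _ ⟨S, rfl, hS⟩
  have hV : Fintype.card (ZMod m × Fin (3 * s)) = 3 * (m * s) := by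
    rw [Fintype.card_prod, ZMod.card, Fintype.card_fin]
    ring
  have hms : 0 < m * s := Nat.mul_pos (by omega) hs
  by_cases hSu : S = univ
  · rw [hSu, card_univ, hV]
    omega
  · have hbound := SimpleGraph.le_mul_card_of_forall_activated
      (TorusCordalis.isRegularOfDegree_four (by omega) (by omega)) (by norm_num : 4 ≤ 2 * 3) hSu hS
    rw [card_compl, hV] at hbound
    omega

/-- If `m ≥ 8` is even and `s ≥ 2` is odd, then
`ms + 1 ≤ min-seed(C_m ⊘ C_{3s}, 3) ≤ ms + 2`. -/
theorem minSeed_torusCordalis_even_odd (m s : ℕ) [NeZero m] (hm : 8 ≤ m)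
    (hmeven : Even m) (hs : 2 ≤ s) (hsodd : Odd s) :
    m * s + 1 ≤ minSeed (torusCordalis m (3 * s)) (fun _ => 3) ∧
    minSeed (torusCordalis m (3 * s)) (fun _ => 3) ≤ m * s + 2 :=
  minSeed_torusCordalis_even_odd_general m s hm hmeven hsodd
end

section
/- For the torus cordalis C_m ⊘ C_n (m, n ≥ 3), min-seed(C_m ⊘ C_n, 3) ≥ ⌈(mn+1)/3⌉ and min-seed(C_m ⊘ C_n, 3) ≤ ⌈m/3⌉(n+1). -/
/-!
Numbering the vertices row by row, `(i, j) ↦ i n + j`, identifies `C_m ⊘ C_n` with the circulant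
graph `C_{mn}(1, n)`: the shifted wrap-around edges just continue the path through the rows. This
graph is 4-regular, so it has `2mn` edges.

Lower bound: every non-seed vertex uses three edges from neighbours activated before it, no edge
is used twice, and the last vertex to be activated has an unused fourth edge, so
`3 (mn - |S|) < 2mn`.

Upper bound: cover the rows cyclically by `⌈m/3⌉` blocks of three consecutive rows. Seeding the
even columns of the first row, the odd columns of the second row and the first vertex of the third
row of each block activates the first two rows of every block; the third row of a block then fills
up column by column, each vertex having an active left neighbour and active neighbours in the rows
above and below.
-/

open Finset SimpleGraph
open scoped Pointwise

section Activation

variable {V W : Type*} {G : SimpleGraph V} {θ : V → ℕ} {S : Set V}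

theorem activated_of_three_adj {v a b c : V} (hθ : θ v ≤ 3)
    (hab : a ≠ b) (hac : a ≠ c) (hbc : b ≠ c)
    (ha : G.Adj a v) (hb : G.Adj b v) (hc : G.Adj c v)
    (ha' : Activated G θ S a) (hb' : Activated G θ S b) (hc' : Activated G θ S c) :
    Activated G θ S v := by
  classical
  refine Activated.step {a, b, c} ?_ ?_ ?_
  · simp only [mem_insert, mem_singleton]
    rintro u (rfl | rfl | rfl) <;> assumption
  · rwa [card_insert_of_notMem (by simp [hab, hac]), card_pair hbc]
  · simp only [mem_insert, mem_singleton]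
    rintro u (rfl | rfl | rfl) <;> assumption

theorem Activated.map {H : SimpleGraph W} {θ' : W → ℕ} (f : G ↪g H)
    (hθ : ∀ v, θ' (f v) ≤ θ v) {v : V} (h : Activated G θ S v) :
    Activated H θ' (f '' S) (f v) := by
  classical
  induction h with
  | base hv => exact .base (Set.mem_image_of_mem f hv)
  | step T hadj hcard _ ih =>
    refine .step (T.map f.toEmbedding) ?_ ?_ ?_
    · simpa using fun u hu => hadj u hu
    · simpa using (hθ _).trans hcard
    · simpa using ih

variable [Fintype V]

theorem minSeed_le {S : Finset V} (h : ∀ v, Activated G θ S v) : minSeed G θ ≤ #S :=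
  Nat.sInf_le ⟨S, rfl, h⟩

theorem le_minSeed {b : ℕ} (h : ∀ S : Finset V, (∀ v, Activated G θ S v) → b ≤ #S) :
    b ≤ minSeed G θ := by
  refine le_csInf ⟨_, univ, rfl, fun v => .base (by simp)⟩ ?_
  rintro _ ⟨S, rfl, hS⟩
  exact h S hS

theorem minSeed_congr [Fintype W] {H : SimpleGraph W} (e : G ≃g H) (θ : W → ℕ) :
    minSeed G (fun v => θ (e v)) = minSeed H θ := by
  refine le_antisymm (le_minSeed fun S hS => ?_) (le_minSeed fun S hS => ?_)
  · refine (minSeed_le (S := S.map e.symm.toEquiv.toEmbedding) fun v => ?_).trans (card_map _).le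
    simpa using (hS (e v)).map e.symm.toEmbedding (θ' := fun v => θ (e v)) (fun _ => by simp)
  · refine (minSeed_le (S := S.map e.toEquiv.toEmbedding) fun w => ?_).trans (card_map _).le
    simpa using (hS (e.symm w)).map e.toEmbedding (fun _ => le_rfl)

end Activation

section Counting

variable {V : Type*} {G : SimpleGraph V} {θ : V → ℕ} {S : Set V}

variable (G θ S) in
def activationStage : ℕ → Set V
  | 0 => S
  | k + 1 => activationStage k ∪
      {v | ∃ T : Finset V, (∀ u ∈ T, G.Adj u v ∧ u ∈ activationStage k) ∧ θ v ≤ #T}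

theorem activationStage_mono : Monotone (activationStage G θ S) :=
  monotone_nat_of_le_succ fun _ => Set.subset_union_left

theorem activated_iff_exists_mem_activationStage {v : V} :
    Activated G θ S v ↔ ∃ k, v ∈ activationStage G θ S k := by
  classical
  constructor
  · intro h
    induction h with
    | base hv => exact ⟨0, hv⟩
    | step T hadj hcard _ ih =>
      choose! k hk using ih
      exact ⟨T.sup k + 1, .inr ⟨T, fun u hu =>
        ⟨hadj u hu, activationStage_mono (le_sup hu) (hk u hu)⟩, hcard⟩⟩
  · rintro ⟨k, hk⟩
    induction k generalizing v with
    | zero => exact .base hk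
    | succ k ih =>
      obtain hk | ⟨T, hT, hcard⟩ := hk
      · exact ih hk
      · exact .step T (fun u hu => (hT u hu).1) hcard fun u hu => ih (hT u hu).2

theorem exists_activation_rank (h : ∀ v, Activated G θ S v) :
    ∃ r : V → ℕ, ∀ v ∉ S, ∃ T : Finset V, (∀ u ∈ T, G.Adj u v ∧ r u < r v) ∧ #T = θ v := by
  classical
  have hex v := activated_iff_exists_mem_activationStage.mp (h v)
  refine ⟨fun v => Nat.find (hex v), fun v hv => ?_⟩
  obtain ⟨k, hk⟩ : ∃ k, Nat.find (hex v) = k + 1 :=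
    Nat.exists_eq_add_one.mpr <| Nat.pos_of_ne_zero fun h0 => hv <| by
      simpa [h0, activationStage] using Nat.find_spec (hex v)
  have hmem := Nat.find_spec (hex v)
  rw [hk] at hmem
  obtain hmem | ⟨T, hT, hcard⟩ := hmem
  · exact absurd (Nat.find_min' (hex v) hmem) (by omega)
  obtain ⟨T', hT'T, hT'card⟩ := exists_subset_card_eq hcard
  refine ⟨T', fun u hu => ⟨(hT u (hT'T hu)).1, ?_⟩, hT'card⟩
  dsimp only
  have := Nat.find_min' (hex u) (hT u (hT'T hu)).2
  omega

theorem sum_threshold_lt_card_edgeFinset [Fintype V] [DecidableEq V] [DecidableRel G.Adj]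
    (hθ : ∀ v, θ v < G.degree v) {S : Finset V} (hS : ∀ v, Activated G θ S v)
    (hSc : Sᶜ.Nonempty) : ∑ v ∈ Sᶜ, θ v < #G.edgeFinset := by
  obtain ⟨r, hr⟩ := exists_activation_rank hS
  choose! T hTadj hTcard using fun v (hv : v ∈ Sᶜ) => hr v (by simpa using hv)
  obtain ⟨w, hw, hwmax⟩ := exists_max_image Sᶜ r hSc
  obtain ⟨b, hb, hbT⟩ := exists_mem_notMem_of_card_lt_card (s := T w) (t := G.neighborFinset w)
    (by rw [hTcard w hw, card_neighborFinset_eq_degree]; exact hθ w)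
  rw [mem_neighborFinset] at hb
  let D := Sᶜ.sigma T
  have hD : #D = ∑ v ∈ Sᶜ, θ v := by
    rw [card_sigma]
    exact sum_congr rfl hTcard
  have hmaps : Set.MapsTo (fun p : (_ : V) × V => s(p.2, p.1)) D (G.edgeFinset.erase s(w, b)) := by
    intro p hp
    obtain ⟨hv, hu⟩ := mem_sigma.mp hp
    obtain ⟨huv, hr⟩ := hTadj p.1 hv p.2 hu
    refine mem_erase.mpr ⟨fun he => ?_, mem_edgeFinset.mpr huv⟩
    obtain ⟨h2, h1⟩ | ⟨h2, h1⟩ := Sym2.eq_iff.mp he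
    · rw [h1, h2] at hr
      exact absurd (hwmax _ (h1 ▸ hv)) (by omega)
    · exact hbT (h1 ▸ h2 ▸ hu)
  have hinj : Set.InjOn (fun p : (_ : V) × V => s(p.2, p.1)) D := by
    intro p hp p' hp' he
    obtain ⟨hv, hu⟩ := mem_sigma.mp hp
    obtain ⟨hv', hu'⟩ := mem_sigma.mp hp'
    have hr := (hTadj _ hv _ hu).2
    have hr' := (hTadj _ hv' _ hu').2
    obtain ⟨h2, h1⟩ | ⟨h2, h1⟩ := Sym2.eq_iff.mp he
    · exact Sigma.ext h1 (heq_of_eq h2)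
    · rw [h1, h2] at hr
      omega
  have hwb : s(w, b) ∈ G.edgeFinset := G.mem_edgeFinset.mpr (G.mem_edgeSet.mpr hb)
  have hcount := card_le_card_of_injOn _ hmaps hinj
  rw [card_erase_of_mem hwb] at hcount
  have := card_pos.mpr ⟨_, hwb⟩
  omega

theorem SimpleGraph.IsRegularOfDegree.two_mul_mul_card_compl_lt [Fintype V] [DecidableEq V]
    [DecidableRel G.Adj] {d k : ℕ} (hG : G.IsRegularOfDegree d) (hk : k < d) {S : Finset V}
    (hS : ∀ v, Activated G (fun _ => k) S v) (hSc : Sᶜ.Nonempty) :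
    2 * k * #Sᶜ < d * Fintype.card V := by
  have := sum_threshold_lt_card_edgeFinset (fun v => (hG v).symm ▸ hk) hS hSc
  rw [sum_const, smul_eq_mul] at this
  have hsum := G.sum_degrees_eq_twice_card_edges
  rw [sum_congr rfl fun v _ => hG v, sum_const, smul_eq_mul, card_univ] at hsum
  nlinarith

end Counting

section Circulant

variable {G : Type*} [AddCommGroup G]

theorem circulantGraph_isRegularOfDegree [Fintype G] [DecidableEq G] (s : Finset G) :
    (circulantGraph (s : Set G)).IsRegularOfDegree ((s ∪ -s).erase 0).card := by
  intro x
  rw [← card_neighborFinset_eq_degree,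
    ← card_image_of_injective ((s ∪ -s).erase 0) (add_right_injective x)]
  congr 1
  ext y
  simp only [mem_neighborFinset, circulantGraph_adj, mem_image, mem_erase, mem_union, mem_neg',
    mem_coe]
  constructor
  · rintro ⟨hxy, h⟩
    refine ⟨y - x, ⟨sub_ne_zero.mpr (Ne.symm hxy), ?_⟩, add_sub_cancel x y⟩
    rwa [neg_sub, or_comm]
  · rintro ⟨d, ⟨hd, h⟩, rfl⟩
    refine ⟨by simpa using hd, ?_⟩
    simpa [or_comm] using h

end Circulant

section Spiral

variable {m n : ℕ} [NeZero m]

def spiralIndex (m n : ℕ) (a : ZMod m × Fin n) : ZMod (m * n) := (a.1.val * n + a.2 : ℕ)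

theorem spiralIndex_injective : Function.Injective (spiralIndex m n) := by
  intro a b h
  have hlt (c : ZMod m × Fin n) : c.1.val * n + c.2 < m * n := by
    have := c.1.val_lt
    have := c.2.isLt
    nlinarith
  have h' := congrArg ZMod.val h
  simp only [spiralIndex, ZMod.val_natCast_of_lt (hlt _)] at h'
  have hn : 0 < n := Fin.pos a.2
  have hdiv (c : ZMod m × Fin n) : (c.1.val * n + c.2) / n = c.1.val := by
    rw [add_comm, Nat.add_mul_div_right _ _ hn, Nat.div_eq_of_lt c.2.isLt, zero_add]
  have hmod (c : ZMod m × Fin n) : (c.1.val * n + c.2) % n = c.2 := by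
    rw [add_comm, Nat.add_mul_mod_self_right, Nat.mod_eq_of_lt c.2.isLt]
  have h1 : a.1.val = b.1.val := by rw [← hdiv a, ← hdiv b, h']
  have h2 : (a.2 : ℕ) = b.2 := by rw [← hmod a, ← hmod b, h']
  exact Prod.ext (ZMod.val_injective _ h1) (Fin.ext h2)

theorem spiralIndex_add_one_fst (i : ZMod m) (j : Fin n) :
    spiralIndex m n (i + 1, j) = spiralIndex m n (i, j) + n := by
  have hm : (i + 1).val ≡ i.val + 1 [MOD m] :=
    (ZMod.natCast_eq_natCast_iff _ _ _).mp (by simp)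
  have := (ZMod.natCast_eq_natCast_iff _ _ _).mpr ((hm.mul_right' n).add_right (j : ℕ))
  simp only [spiralIndex]
  rw [this]
  push_cast
  ring

theorem torusCordalis_rel_iff (a b : ZMod m × Fin n) :
    ((b.1 = a.1 + 1 ∧ b.2 = a.2) ∨ (a.1 = b.1 ∧ (b.2 : ℕ) = a.2 + 1) ∨
      ((a.2 : ℕ) = n - 1 ∧ (b.2 : ℕ) = 0 ∧ b.1 = a.1 + 1)) ↔
      spiralIndex m n b - spiralIndex m n a ∈ ({1, (n : ZMod (m * n))} : Set _) := by
  obtain ⟨i, j⟩ := a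
  have hwrap (hj : (j : ℕ) = n - 1) (k : Fin n) (hk : (k : ℕ) = 0) :
      spiralIndex m n (i + 1, k) = spiralIndex m n (i, j) + 1 := by
    rw [spiralIndex_add_one_fst]
    simp only [spiralIndex, hk, hj]
    rw [← Nat.cast_succ, ← Nat.cast_add]
    congr 1
    have := j.isLt
    omega
  rw [Set.mem_insert_iff, Set.mem_singleton_iff, sub_eq_iff_eq_add', sub_eq_iff_eq_add']
  constructor
  · rintro (⟨h1, h2⟩ | ⟨h1, h2⟩ | ⟨h1, h2, h3⟩)
    · rw [← Prod.mk.eta (p := b), h1, h2]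
      exact .inr (spiralIndex_add_one_fst i j)
    · left
      simp only [spiralIndex, ← h1, h2]
      push_cast
      ring
    · rw [← Prod.mk.eta (p := b), h3]
      exact .inl (hwrap h1 b.2 h2)
  · rintro (h | h)
    · have := j.isLt
      by_cases hj : (j : ℕ) + 1 < n
      · obtain rfl : b = (i, ⟨j + 1, hj⟩) := spiralIndex_injective <| h.trans <| by
          simp only [spiralIndex]
          push_cast
          ring
        exact .inr (.inl ⟨rfl, rfl⟩)
      · obtain rfl : b = (i + 1, ⟨0, by omega⟩) :=
          spiralIndex_injective (h.trans (hwrap (by omega) _ rfl).symm)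
        exact .inr (.inr ⟨show (j : ℕ) = n - 1 by omega, rfl, rfl⟩)
    · obtain rfl : b = (i + 1, j) :=
        spiralIndex_injective (h.trans (spiralIndex_add_one_fst i j).symm)
      exact .inl ⟨rfl, rfl⟩

noncomputable def spiralIso [NeZero n] :
    torusCordalis m n ≃g circulantGraph {1, (n : ZMod (m * n))} where
  toEquiv := .ofBijective (spiralIndex m n) <| (Fintype.bijective_iff_injective_and_card _).mpr
    ⟨spiralIndex_injective, by simp [ZMod.card]⟩
  map_rel_iff' {a b} := by
    rw [torusCordalis, fromRel_adj, circulantGraph_adj, Equiv.ofBijective_apply,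
      Equiv.ofBijective_apply, torusCordalis_rel_iff, torusCordalis_rel_iff]
    exact and_congr (not_congr spiralIndex_injective.eq_iff) or_comm

end Spiral

section CirculantOneN

variable {N n : ℕ}

theorem ZMod.natCast_ne_zero_of_lt {k : ℕ} (h0 : 0 < k) (hk : k < N) : (k : ZMod N) ≠ 0 := by
  rw [Ne, ZMod.natCast_eq_zero_iff]
  exact Nat.not_dvd_of_pos_of_lt h0 hk

/-- The four jumps `±1, ±n` of `C_N(1, n)` are nonzero and pairwise distinct. -/
theorem jumps_distinct (hn : 2 ≤ n) (hN : 2 * n < N) :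
    (1 : ZMod N) ≠ 0 ∧ (n : ZMod N) ≠ 0 ∧ (2 : ZMod N) ≠ 0 ∧ 2 * (n : ZMod N) ≠ 0 ∧
      (n : ZMod N) - 1 ≠ 0 ∧ (n : ZMod N) + 1 ≠ 0 := by
  refine ⟨?_, ?_, ?_, ?_, ?_, ?_⟩
  · exact_mod_cast ZMod.natCast_ne_zero_of_lt (k := 1) one_pos (by omega)
  · exact ZMod.natCast_ne_zero_of_lt (by omega) (by omega)
  · exact_mod_cast ZMod.natCast_ne_zero_of_lt (k := 2) two_pos (by omega)
  · exact_mod_cast ZMod.natCast_ne_zero_of_lt (k := 2 * n) (by omega) (by omega)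
  · have := ZMod.natCast_ne_zero_of_lt (N := N) (k := n - 1) (by omega) (by omega)
    rwa [Nat.cast_sub (by omega), Nat.cast_one] at this
  · exact_mod_cast ZMod.natCast_ne_zero_of_lt (k := n + 1) (by omega) (by omega)

theorem circulantGraph_one_natCast_isRegularOfDegree [NeZero N] (hn : 2 ≤ n) (hN : 2 * n < N) :
    (circulantGraph {1, (n : ZMod N)}).IsRegularOfDegree 4 := by
  have h := circulantGraph_isRegularOfDegree ({1, (n : ZMod N)} : Finset (ZMod N))
  convert h using 2
  · rfl
  · simp
  obtain ⟨h1, h2, h3, h4, h5, h6⟩ := jumps_distinct hn hN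
  rw [neg_insert, neg_singleton, insert_union, singleton_union, erase_eq_of_notMem (by
    simp [h1.symm, h2.symm, h1, h2])]
  rw [card_insert_of_notMem, card_insert_of_notMem, card_pair]
  · exact fun h => h5 (by linear_combination h)
  · simp only [mem_insert, mem_singleton, not_or]
    exact ⟨fun h => h6 (by linear_combination h), fun h => h4 (by linear_combination h)⟩
  · simp only [mem_insert, mem_singleton, not_or]
    exact ⟨fun h => h5 (by linear_combination -h), fun h => h3 (by linear_combination h),
      fun h => h6 (by linear_combination h)⟩

theorem le_minSeed_circulantGraph [NeZero N] (hn : 2 ≤ n) (hN : 2 * n < N) :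
    (N + 3) / 3 ≤ minSeed (circulantGraph {1, (n : ZMod N)}) (fun _ => 3) := by
  classical
  refine le_minSeed fun S hS => ?_
  have hcard := card_le_univ S
  rw [ZMod.card] at hcard
  rcases Sᶜ.eq_empty_or_nonempty with hSc | hSc
  · rw [compl_eq_empty_iff] at hSc
    rw [hSc, card_univ, ZMod.card]
    omega
  · have := (circulantGraph_one_natCast_isRegularOfDegree hn hN).two_mul_mul_card_compl_lt
      (by norm_num) hS hSc
    rw [card_compl, ZMod.card] at this
    omega

variable {S : Set (ZMod N)}

local notation "Act" => Activated (circulantGraph ({1, (n : ZMod N)} : Set (ZMod N))) (fun _ => 3) S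

theorem activated_of_path_and_chord (hn : 2 ≤ n) (hN : 2 * n < N) {x : ZMod N}
    (hl : Act (x - 1)) (hr : Act (x + 1)) (hc : Act (x + n) ∨ Act (x - n)) : Act x := by
  obtain ⟨h1, h2, h3, -, h5, h6⟩ := jumps_distinct hn hN
  have hlr : x - 1 ≠ x + 1 := fun h => h3 (by linear_combination -h)
  rcases hc with hc | hc
  · refine activated_of_three_adj le_rfl hlr (fun h => h6 ?_) (fun h => h5 ?_)
      (by simp [h1]) (by simp [h1]) (by simp [h2]) hl hr hc
    · linear_combination -h
    · linear_combination -h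
  · refine activated_of_three_adj le_rfl hlr (fun h => h5 ?_) (fun h => h6 ?_)
      (by simp [h1]) (by simp [h1]) (by simp [h2]) hl hr hc
    · linear_combination h
    · linear_combination h

theorem activated_of_chords_and_path (hn : 2 ≤ n) (hN : 2 * n < N) {x : ZMod N}
    (hd : Act (x - n)) (hu : Act (x + n)) (hp : Act (x - 1) ∨ Act (x + 1)) : Act x := by
  obtain ⟨h1, h2, -, h4, h5, h6⟩ := jumps_distinct hn hN
  have hdu : x - n ≠ x + n := fun h => h4 (by linear_combination -h)
  rcases hp with hp | hp
  · refine activated_of_three_adj le_rfl hdu (fun h => h5 ?_) (fun h => h6 ?_)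
      (by simp [h2]) (by simp [h2]) (by simp [h1]) hd hu hp
    · linear_combination -h
    · linear_combination h
  · refine activated_of_three_adj le_rfl hdu (fun h => h6 ?_) (fun h => h5 ?_)
      (by simp [h2]) (by simp [h2]) (by simp [h1]) hd hu hp
    · linear_combination -h
    · linear_combination h

theorem activated_block (hn : 2 ≤ n) (hN : 2 * n < N) {b : ZMod N}
    (h₀ : ∀ p < n, Even p → Act (b + p)) (h₁ : ∀ p < n, Odd p → Act (b + n + p))
    (h₂ : Act (b + 2 * n)) : ∀ p ≤ n, Act (b + p) ∧ Act (b + n + p) := by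
  have hlast : Act (b + n + n) := by convert h₂ using 1; ring
  have seed₁ : ∀ p ≤ n, Odd p → Act (b + n + p) := fun p hp hodd =>
    hp.lt_or_eq.elim (h₁ p · hodd) (· ▸ hlast)
  -- First the even columns of the second row, each seeing three seeds, then the odd columns of
  -- the first row.
  have row₁ : ∀ p ≤ n, Act (b + n + p) := by
    intro p hp
    obtain ⟨k, rfl | rfl⟩ := Nat.even_or_odd' p
    · rcases hp.lt_or_eq with hp | hp
      · rcases k with _ | k
        · refine activated_of_chords_and_path hn hN ?_ ?_ (.inr ?_)
          · convert h₀ 0 (by omega) ⟨0, rfl⟩ using 1; push_cast; ring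
          · convert h₂ using 1; push_cast; ring
          · convert seed₁ 1 (by omega) odd_one using 1; push_cast; ring
        · refine activated_of_path_and_chord hn hN ?_ ?_ (.inr ?_)
          · convert seed₁ (2 * k + 1) (by omega) ⟨k, rfl⟩ using 1; push_cast; ring
          · convert seed₁ (2 * k + 3) (by omega) ⟨k + 1, by ring⟩ using 1; push_cast; ring
          · convert h₀ (2 * (k + 1)) hp (even_two_mul _) using 1; ring
      · exact hp ▸ hlast
    · exact seed₁ _ hp ⟨k, rfl⟩
  have hmid : Act (b + n) := by convert row₁ 0 (by omega) using 1; simp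
  refine fun p hp => ⟨?_, row₁ p hp⟩
  rcases hp.lt_or_eq with hp | rfl
  · obtain ⟨k, rfl | rfl⟩ := Nat.even_or_odd' p
    · exact h₀ _ hp (even_two_mul k)
    · refine activated_of_path_and_chord hn hN ?_ ?_ (.inl ?_)
      · convert h₀ (2 * k) (by omega) (even_two_mul k) using 1; push_cast; ring
      · rcases (by omega : 2 * k + 2 < n ∨ 2 * k + 2 = n) with hk | hk
        · convert h₀ (2 * k + 2) hk ⟨k + 1, by ring⟩ using 1; push_cast; ring
        · convert hmid using 1; rw [← hk]; push_cast; ring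
      · convert h₁ (2 * k + 1) hp ⟨k, rfl⟩ using 1; ring
  · exact hmid

theorem activated_gap_row (hn : 2 ≤ n) (hN : 2 * n < N) {b : ZMod N}
    (hmid : ∀ p ≤ n, Act (b + n + p)) (hnext : ∀ p < n, Act (b + 3 * n + p)) :
    ∀ p < n, Act (b + 2 * n + p) := by
  intro p
  induction p with
  | zero => intro _; convert hmid n le_rfl using 1; push_cast; ring
  | succ p ih =>
    intro hp
    refine activated_of_chords_and_path hn hN ?_ ?_ (.inl ?_)
    · convert hmid (p + 1) hp.le using 1; push_cast; ring
    · convert hnext (p + 1) hp using 1; push_cast; ring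
    · convert ih (by omega) using 1; push_cast; ring

end CirculantOneN

section Seeds

variable {m n : ℕ}

/-- The `k`-th seed of a block, `k ≤ n`: column `k` of its first row if `k < n` is even, column `k`
of its second row otherwise (for `k = n`, the first vertex of its third row). -/
def seedOffset (n k : ℕ) : ℕ := if Even k ∧ k < n then k else n + k

def spiralSeeds (m n : ℕ) : Finset (ZMod (m * n)) :=
  (range ((m + 2) / 3) ×ˢ range (n + 1)).image
    fun tk => ((3 * tk.1 * n + seedOffset n tk.2 : ℕ) : ZMod (m * n))

theorem card_spiralSeeds_le : #(spiralSeeds m n) ≤ (m + 2) / 3 * (n + 1) :=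
  card_image_le.trans (by rw [card_product, card_range, card_range])

local notation "Act" => Activated (circulantGraph {1, (n : ZMod (m * n))}) (fun _ => 3)
  (spiralSeeds m n : Set (ZMod (m * n)))

theorem activated_spiralSeeds_block (hm : 3 ≤ m) (hn : 2 ≤ n) {t : ℕ} (ht : t < (m + 2) / 3) :
    ∀ p ≤ n, Act (3 * t * n + p) ∧ Act (3 * t * n + n + p) := by
  have seed {k : ℕ} (hk : k ≤ n) : Act (3 * t * n + seedOffset n k : ℕ) :=
    .base <| mem_image.mpr
      ⟨(t, k), mem_product.mpr ⟨mem_range.mpr ht, mem_range.mpr (by omega)⟩, rfl⟩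
  refine activated_block hn (by nlinarith) (fun p hp hev => ?_) (fun p hp hodd => ?_) ?_
  · convert seed hp.le using 1
    simp [seedOffset, hev, hp]
  · convert seed hp.le using 1
    simp [seedOffset, Nat.not_even_iff_odd.mpr hodd]
    ring
  · convert seed le_rfl using 1
    simp [seedOffset]
    ring

theorem activated_spiralSeeds_gap_row (hm : 3 ≤ m) (hn : 2 ≤ n) {t : ℕ} (ht : 3 * t + 2 < m) :
    ∀ p < n, Act (3 * t * n + 2 * n + p) := by
  refine activated_gap_row hn (by nlinarith)
    (fun p hp => (activated_spiralSeeds_block hm hn (by omega) p hp).2) fun p hp => ?_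
  rcases (by omega : 3 * (t + 1) < m ∨ 3 * (t + 1) = m) with hlt | heq
  · convert (activated_spiralSeeds_block hm hn (t := t + 1) (by omega) p hp.le).1 using 1
    push_cast
    ring
  · convert (activated_spiralSeeds_block hm hn (t := 0) (by omega) p hp.le).1 using 1
    have : ((3 * (t + 1) * n : ℕ) : ZMod (m * n)) = 0 := heq ▸ ZMod.natCast_self _
    push_cast at this ⊢
    linear_combination this

theorem activated_spiralSeeds (hm : 3 ≤ m) (hn : 2 ≤ n) (x : ZMod (m * n)) : Act x := by
  have : NeZero (m * n) := ⟨by positivity⟩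
  obtain ⟨r, hr, c, hc, rfl⟩ : ∃ r < m, ∃ c < n, x = ((r * n + c : ℕ) : ZMod (m * n)) :=
    ⟨x.val / n, Nat.div_lt_of_lt_mul (by simpa [mul_comm] using x.val_lt), x.val % n,
      Nat.mod_lt _ (by omega), by rw [Nat.div_add_mod', ZMod.natCast_zmod_val]⟩
  obtain ⟨t, i, hi, rfl⟩ : ∃ t i, i < 3 ∧ r = 3 * t + i := ⟨r / 3, r % 3, by omega, by omega⟩
  interval_cases i
  · convert (activated_spiralSeeds_block hm hn (t := t) (by omega) c hc.le).1 using 1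
    push_cast; ring
  · convert (activated_spiralSeeds_block hm hn (t := t) (by omega) c hc.le).2 using 1
    push_cast; ring
  · convert activated_spiralSeeds_gap_row hm hn hr c hc using 1
    push_cast; ring

end Seeds

/-- For `m, n ≥ 3`,
`⌈(mn+1)/3⌉ ≤ min-seed(C_m ⊘ C_n, 3) ≤ ⌈m/3⌉(n+1)`. -/
theorem minSeed_torusCordalis_bounds (m n : ℕ) [NeZero m] (hm : 3 ≤ m) (hn : 3 ≤ n) :
    (m * n + 3) / 3 ≤ minSeed (torusCordalis m n) (fun _ => 3) ∧
    minSeed (torusCordalis m n) (fun _ => 3) ≤ (m + 2) / 3 * (n + 1) := by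
  have : NeZero n := ⟨by omega⟩
  have hcongr : minSeed (torusCordalis m n) (fun _ => 3) =
      minSeed (circulantGraph {1, (n : ZMod (m * n))}) (fun _ => 3) :=
    minSeed_congr spiralIso (fun _ => 3)
  rw [hcongr]
  exact ⟨le_minSeed_circulantGraph (by omega) (by nlinarith),
    (minSeed_le (activated_spiralSeeds hm (by omega))).trans card_spiralSeeds_le⟩
end
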